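/- arXiv:2206.01781 — 4 statements merged into one kernel-verified Lean document; each statement's English description precedes it below -/
import Mathlib

section
/- Under the dynamics pᵢ(t) = e^{-k_p t} pᵢ(0) + (1 - e^{-k_p t}) p_{di}, if the initial positions are mutually equidistant at distance D_init and each goal satisfies p_{di} - pᵢ(0) = (√3 D_G / D_init)(c - pᵢ(0)) with c the centroid, then the three robots remain mutually equidistant for all time t ≥ 0. -/
theorem stmt_8 (k_p D_init D_G : ℝ) (hkp : 0 < k_p) (hDinit : 0 < D_init) (hDG : 0 < D_G)
    (p₀ pd : Fin 3 → EuclideanSpace ℝ (Fin 2))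
    (hdist : ∀ i j, i ≠ j → ‖p₀ i - p₀ j‖ = D_init)
    (c : EuclideanSpace ℝ (Fin 2)) (hc : c = (1/3 : ℝ) • (p₀ 0 + p₀ 1 + p₀ 2))
    (hgoal : ∀ i, pd i = p₀ i + (Real.sqrt 3 * D_G / D_init) • (c - p₀ i))
    (p : Fin 3 → ℝ → EuclideanSpace ℝ (Fin 2))
    (hp : ∀ i t, p i t = Real.exp (-k_p*t) • p₀ i + (1 - Real.exp (-k_p*t)) • pd i) :
    ∀ t ≥ 0, ∀ i j k l : Fin 3, i ≠ j → k ≠ l →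
      ‖p i t - p j t‖ = ‖p k t - p l t‖ := by
  set r : ℝ := Real.sqrt 3 * D_G / D_init with hr
  have key : ∀ t : ℝ, ∀ i j : Fin 3, i ≠ j →
      ‖p i t - p j t‖ =
        |Real.exp (-k_p*t) + (1 - Real.exp (-k_p*t)) * (1 - r)| * D_init := by
    intro t i j hij
    have hdiff : p i t - p j t =
        (Real.exp (-k_p*t) + (1 - Real.exp (-k_p*t)) * (1 - r)) • (p₀ i - p₀ j) := by
      rw [hp, hp, hgoal, hgoal]
      module
    rw [hdiff, norm_smul, Real.norm_eq_abs, hdist i j hij]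
  intro t _ i j k l hij hkl
  rw [key t i j hij, key t k l hkl]
end

section
/- Let p₁* = α p_{d1} + (1-α) p_{d2} and p₂* = p₁* - D_s ê where ê = (p_{d2} - p_{d1})/‖p_{d2} - p_{d1}‖, with α ∈ (0,1), D_s > 0 and D_G = ‖p_{d2} - p_{d1}‖ > 0. Then the Lagrange multiplier μ₁₂* = 2 (a₁₂ᵀ û₁)/‖a₁₂‖², where a₁₂ = -(p₁* - p₂*) and û₁ = -k_p(p₁* - p_{d1}), equals 2 k_p (1-α) D_G / D_s, which is strictly positive. -/
/-!
Both `a₁₂ = -D_s ê` and `û₁ = -k_p (1-α)(p_{d2} - p_{d1})` are multiples of the same nonzero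
vector `p_{d2} - p_{d1}`, and for collinear vectors `⟪a v, b v⟫ / ‖a v‖² = b / a`.
-/

theorem inner_smul_smul_div_norm_sq {E : Type*} [NormedAddCommGroup E] [InnerProductSpace ℝ E]
    {v : E} (hv : v ≠ 0) (a b : ℝ) :
    inner ℝ (a • v) (b • v) / ‖a • v‖ ^ 2 = b / a := by
  have hv2 : ‖v‖ ^ 2 ≠ 0 := by positivity
  rw [real_inner_smul_left, real_inner_smul_right, real_inner_self_eq_norm_sq, norm_smul,
    mul_pow, Real.norm_eq_abs, sq_abs]
  by_cases ha : a = 0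
  · simp [ha]
  · field_simp

theorem stmt_12 (k_p D_s α : ℝ) (hkp : 0 < k_p) (hDs : 0 < D_s)
    (hα : α ∈ Set.Ioo (0:ℝ) 1)
    (pd1 pd2 : EuclideanSpace ℝ (Fin 2)) (hne : pd1 ≠ pd2)
    (D_G : ℝ) (hDG : D_G = ‖pd2 - pd1‖)
    (e : EuclideanSpace ℝ (Fin 2)) (he : e = (D_G)⁻¹ • (pd2 - pd1))
    (p1 p2 : EuclideanSpace ℝ (Fin 2))
    (hp1 : p1 = α • pd1 + (1-α) • pd2) (hp2 : p2 = p1 - D_s • e)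
    (a12 u1 : EuclideanSpace ℝ (Fin 2))
    (ha12 : a12 = -(p1 - p2)) (hu1 : u1 = -k_p • (p1 - pd1))
    (μ : ℝ) (hμ : μ = 2 * (inner ℝ a12 u1 : ℝ) / ‖a12‖^2) :
    μ = 2 * k_p * (1-α) * D_G / D_s ∧ 0 < μ := by
  have hv : pd2 - pd1 ≠ 0 := sub_ne_zero.mpr hne.symm
  have hDG_pos : 0 < D_G := hDG ▸ norm_pos_iff.mpr hv
  have ha12' : a12 = (-(D_s / D_G)) • (pd2 - pd1) := by
    rw [ha12, hp2, he, smul_smul, div_eq_mul_inv]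
    module
  have hu1' : u1 = (-(k_p * (1 - α))) • (pd2 - pd1) := by
    rw [hu1, hp1]
    module
  have hμ' : μ = 2 * k_p * (1-α) * D_G / D_s := by
    rw [hμ, ha12', hu1', mul_div_assoc, inner_smul_smul_div_norm_sq hv]
    field_simp
  refine ⟨hμ', hμ' ▸ ?_⟩
  have h1α : 0 < 1 - α := sub_pos.mpr hα.2
  positivity
end

section
/- If two robots are in deadlock with p₁ = α p_{d1} + (1-α) p_{d2} and p₂ = p₁ - D_s ê (ê the unit vector from p_{d1} to p_{d2}, α ∈ (0,1)), then ‖p₁ - p_{d1}‖ + ‖p₂ - p_{d2}‖ = D_s + D_G, where D_G = ‖p_{d2} - p_{d1}‖; hence the two-robot deadlock set lies in a measure-zero subset of ℝ⁴. -/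
theorem stmt_14 (D_s α : ℝ) (hDs : 0 < D_s) (hα : α ∈ Set.Ioo (0:ℝ) 1)
    (pd1 pd2 : EuclideanSpace ℝ (Fin 2)) (hne : pd1 ≠ pd2)
    (D_G : ℝ) (hDG : D_G = ‖pd2 - pd1‖)
    (e : EuclideanSpace ℝ (Fin 2)) (he : e = (D_G)⁻¹ • (pd2 - pd1))
    (p1 p2 : EuclideanSpace ℝ (Fin 2))
    (hp1 : p1 = α • pd1 + (1-α) • pd2) (hp2 : p2 = p1 - D_s • e) :
    ‖p1 - pd1‖ + ‖p2 - pd2‖ = D_s + D_G := by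
  obtain ⟨hα0, hα1⟩ := hα
  have hv : (0:ℝ) < ‖pd2 - pd1‖ := by
    rw [norm_pos_iff, sub_ne_zero]; exact fun h => hne h.symm
  have hDGpos : 0 < D_G := hDG ▸ hv
  have h1 : p1 - pd1 = (1 - α) • (pd2 - pd1) := by
    rw [hp1]; module
  have h2 : p2 - pd2 = (-(α + D_s / D_G)) • (pd2 - pd1) := by
    rw [hp2, hp1, he]
    have : D_s • (D_G)⁻¹ • (pd2 - pd1) = (D_s / D_G) • (pd2 - pd1) := by
      rw [smul_smul]; ring_nf
    rw [this]; module
  rw [h1, h2, norm_smul, norm_smul, ← hDG]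
  have : D_s / D_G * D_G = D_s := div_mul_cancel₀ _ (ne_of_gt hDGpos)
  have hpos : 0 < α + D_s / D_G := by positivity
  rw [Real.norm_eq_abs, Real.norm_eq_abs, abs_of_pos (by linarith),
    abs_of_neg (neg_lt_zero.mpr hpos), neg_neg]
  field_simp
  ring
end

section
/- Let Δp(t) solve Δp'(t) = -γ ((‖Δp(t)‖² - D_s²) / (2‖Δp(t)‖²)) Δp(t) with initial condition Δp(t₀) = D₀ ê for a unit vector ê and D₀ > D_s > 0. Then Δp(t) = D(t) ê for all t ≥ t₀, where D(t) = sqrt((D₀² - D_s²)e^{-γ(t-t₀)} + D_s²); in particular the direction of the relative position is invariant. -/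
open Real Set
open scoped InnerProductSpace

/-!
The equation is radial, `x' = c(t) • x`, so `x / ‖x‖` is constant as long as `x` does not vanish:
both `x` and `‖x‖` solve the same scalar linear equation. The squared norm `n = ‖x‖²` satisfies
`n' = -γ (n - D_s²)` where `x ≠ 0`, and `n' ≥ -γ n` everywhere, so `n e^{γ (t - t₀)}` is
nondecreasing and `x` never reaches `0`; hence `n` is the explicit solution of the linear equation
and `‖x‖ = D(t)`.
-/

theorem HasDerivAt.norm_of_ne_zero {E : Type*} [NormedAddCommGroup E] [InnerProductSpace ℝ E]
    {f : ℝ → E} {f' : E} {t : ℝ} (hf : HasDerivAt f f' t) (h0 : f t ≠ 0) :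
    HasDerivAt (‖f ·‖) (⟪f t, f'⟫_ℝ / ‖f t‖) t := by
  have h := hf.norm_sq.sqrt (by positivity)
  simp only [sqrt_sq (norm_nonneg _)] at h
  convert h using 1
  ring

theorem eq_div_smul_of_hasDerivAt_smul {E : Type*} [NormedAddCommGroup E] [NormedSpace ℝ E]
    {x : ℝ → E} {f a : ℝ → ℝ} {t₀ : ℝ} (hx : ∀ t ≥ t₀, HasDerivAt x (a t • x t) t)
    (hf : ∀ t ≥ t₀, HasDerivAt f (a t * f t) t) (hf0 : ∀ t ≥ t₀, f t ≠ 0) :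
    ∀ t ≥ t₀, x t = (f t / f t₀) • x t₀ := by
  have hu : ∀ t ≥ t₀, HasDerivAt (fun s ↦ (f s)⁻¹ • x s) 0 t := by
    intro t ht
    convert ((hf t ht).inv (hf0 t ht)).smul (hx t ht) using 1
    · rfl
    rw [smul_smul, ← add_smul, Pi.inv_apply]
    field_simp [hf0 t ht]
    simp
  intro t ht
  have hconst := constant_of_has_deriv_right_zero
    (fun s hs ↦ (hu s hs.1).continuousAt.continuousWithinAt)
    (fun s hs ↦ (hu s hs.1).hasDerivWithinAt) t ⟨ht, le_rfl⟩
  rw [div_eq_mul_inv, ← smul_smul, ← hconst, smul_smul, mul_inv_cancel₀ (hf0 t ht), one_smul]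

theorem mul_exp_le_of_neg_mul_le_deriv {f f' : ℝ → ℝ} {γ t₀ : ℝ}
    (hf : ∀ t ≥ t₀, HasDerivAt f (f' t) t) (hle : ∀ t ≥ t₀, -γ * f t ≤ f' t) :
    ∀ t ≥ t₀, f t₀ * exp (-γ * (t - t₀)) ≤ f t := by
  have hg : ∀ t ≥ t₀, HasDerivAt (fun s ↦ f s * exp (γ * (s - t₀)))
      ((f' t + γ * f t) * exp (γ * (t - t₀))) t := by
    intro t ht
    exact ((hf t ht).mul (((hasDerivAt_id' t).sub_const t₀).const_mul γ).exp).congr_deriv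
      (by ring)
  have hmono : MonotoneOn (fun s ↦ f s * exp (γ * (s - t₀))) (Ici t₀) := by
    refine monotoneOn_of_hasDerivWithinAt_nonneg (convex_Ici t₀)
      (fun t ht ↦ (hg t ht).continuousAt.continuousWithinAt)
      (fun t ht ↦ (hg t (interior_subset ht)).hasDerivWithinAt) fun t ht ↦ ?_
    have hsum : 0 ≤ f' t + γ * f t := by linarith [hle t (interior_subset ht)]
    positivity
  intro t ht
  have h := hmono self_mem_Ici ht ht
  simp only [sub_self, mul_zero, exp_zero, mul_one] at h
  calc f t₀ * exp (-γ * (t - t₀)) ≤ f t * exp (γ * (t - t₀)) * exp (-γ * (t - t₀)) := by gcongr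
    _ = f t := by rw [mul_assoc, ← exp_add, neg_mul, add_neg_cancel, exp_zero, mul_one]

theorem eq_norm_div_smul_of_hasDerivAt_smul {E : Type*} [NormedAddCommGroup E]
    [InnerProductSpace ℝ E] {x : ℝ → E} {c : ℝ → ℝ} {t₀ : ℝ}
    (hx : ∀ t ≥ t₀, HasDerivAt x (c t • x t) t) (hx0 : ∀ t ≥ t₀, x t ≠ 0) :
    ∀ t ≥ t₀, x t = (‖x t‖ / ‖x t₀‖) • x t₀ := by
  refine eq_div_smul_of_hasDerivAt_smul hx (fun t ht ↦ ?_) fun t ht ↦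
    norm_ne_zero_iff.2 (hx0 t ht)
  convert (hx t ht).norm_of_ne_zero (hx0 t ht) using 1
  rw [real_inner_smul_right, real_inner_self_eq_norm_sq]
  field_simp [norm_ne_zero_iff.2 (hx0 t ht)]

section RelaxationODE

variable {E : Type*} [NormedAddCommGroup E] [InnerProductSpace ℝ E] {γ D_s t₀ : ℝ} {x : ℝ → E}

-- `/ ‖x t‖ ^ 2 * ‖x t‖ ^ 2` is not simplified: it makes the derivative `0` where `x t = 0`.
theorem hasDerivAt_norm_sq_of_relaxation {t : ℝ}
    (hx : HasDerivAt x ((-γ * (‖x t‖^2 - D_s^2) / (2 * ‖x t‖^2)) • x t) t) :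
    HasDerivAt (‖x ·‖ ^ 2) (-γ * (‖x t‖ ^ 2 - D_s ^ 2) / ‖x t‖ ^ 2 * ‖x t‖ ^ 2) t := by
  convert hx.norm_sq using 1
  rw [real_inner_smul_right, real_inner_self_eq_norm_sq]
  ring

variable (hode : ∀ t ≥ t₀, HasDerivAt x ((-γ * (‖x t‖^2 - D_s^2) / (2 * ‖x t‖^2)) • x t) t)
include hode

theorem ne_zero_of_relaxation (hγ : 0 ≤ γ) (h0 : x t₀ ≠ 0) : ∀ t ≥ t₀, x t ≠ 0 := by
  have hlow := mul_exp_le_of_neg_mul_le_deriv (γ := γ)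
    (fun t ht ↦ hasDerivAt_norm_sq_of_relaxation (hode t ht)) fun t _ ↦ by
      rcases eq_or_ne ‖x t‖ 0 with h | h
      · simp [h]
      · rw [div_mul_cancel₀ _ (pow_ne_zero 2 h)]
        nlinarith [sq_nonneg D_s]
  intro t ht
  have hpos : 0 < ‖x t₀‖ ^ 2 * exp (-γ * (t - t₀)) := by positivity
  simpa using (hpos.trans_le (hlow t ht)).ne'

theorem norm_sq_eq_of_relaxation (hx0 : ∀ t ≥ t₀, x t ≠ 0) :
    ∀ t ≥ t₀, ‖x t‖ ^ 2 = (‖x t₀‖ ^ 2 - D_s ^ 2) * exp (-γ * (t - t₀)) + D_s ^ 2 := by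
  have hexp : ∀ t, HasDerivAt (fun s ↦ exp (-γ * (s - t₀))) (-γ * exp (-γ * (t - t₀))) t :=
    fun t ↦ (((hasDerivAt_id' t).sub_const t₀).const_mul (-γ)).exp.congr_deriv (by ring)
  have h := eq_div_smul_of_hasDerivAt_smul (x := fun t ↦ ‖x t‖ ^ 2 - D_s ^ 2) (a := fun _ ↦ -γ)
    (fun t ht ↦ by
      simpa [div_mul_cancel₀, hx0 t ht] using
        (hasDerivAt_norm_sq_of_relaxation (hode t ht)).sub_const (D_s ^ 2))
    (fun t _ ↦ hexp t) fun t _ ↦ (exp_pos _).ne'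
  intro t ht
  have ht' := h t ht
  simp only [sub_self, mul_zero, exp_zero, div_one, smul_eq_mul] at ht'
  linarith

end RelaxationODE

theorem stmt_17 (γ D_s D₀ t₀ : ℝ) (hγ : 0 < γ) (hDs : 0 < D_s) (h₀ : D_s < D₀)
    (e : EuclideanSpace ℝ (Fin 2)) (he : ‖e‖ = 1)
    (Δp : ℝ → EuclideanSpace ℝ (Fin 2))
    (hinit : Δp t₀ = D₀ • e)
    (hode : ∀ t ≥ t₀, HasDerivAt Δp
      ((-γ * (‖Δp t‖^2 - D_s^2) / (2 * ‖Δp t‖^2)) • Δp t) t) :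
    ∀ t ≥ t₀, Δp t =
      Real.sqrt ((D₀^2 - D_s^2) * Real.exp (-γ*(t - t₀)) + D_s^2) • e := by
  have hD₀ : 0 < D₀ := hDs.trans h₀
  have hnorm₀ : ‖Δp t₀‖ = D₀ := by rw [hinit, norm_smul, he, mul_one, norm_of_nonneg hD₀.le]
  have hne := ne_zero_of_relaxation hode hγ.le (norm_pos_iff.1 (hnorm₀ ▸ hD₀))
  intro t ht
  calc Δp t = (‖Δp t‖ / ‖Δp t₀‖) • Δp t₀ := eq_norm_div_smul_of_hasDerivAt_smul hode hne t ht
    _ = ‖Δp t‖ • e := by rw [hnorm₀, hinit, smul_smul, div_mul_cancel₀ _ hD₀.ne']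
    _ = _ := by rw [← sqrt_sq (norm_nonneg (Δp t)), norm_sq_eq_of_relaxation hode hne t ht, hnorm₀]
end
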